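/- Let 𝒯 = {T1, …, Tt} be a set of trees on the same label set 𝒳. (i) For every tree T on label set 𝒳 there exists a leaf-disagreement for 𝒯 of size at most Σ_{Ti∈𝒯} d_LR(T, Ti). (ii) For every leaf-disagreement for 𝒯 of size v there exists a tree T on label set 𝒳 with Σ_{Ti∈𝒯} d_LR(T, Ti) ≤ v. Consequently, MASTRL(𝒯) = min over all trees T on 𝒳 of Σ_{Ti∈𝒯} d_LR(T, Ti). -/

import Mathlib

/-!
Common framework: rooted binary trees with leaves bijectively labeled by a
finite label set, leaf removal, restriction, the leaf-removal distance `d_LR`,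
compatibility, leaf-disagreements, triplets, LPR moves, etc.
-/

universe u

/-- A rooted binary tree whose leaves carry labels from `α`. -/
inductive LTree (α : Type u) : Type u where
  | leaf : α → LTree α
  | node : LTree α → LTree α → LTree α

namespace LTree

variable {α : Type u} [DecidableEq α]

/-- The set of leaf labels of a tree. -/
def labels : LTree α → Finset α
  | leaf a => {a}
  | node l r => labels l ∪ labels r

/-- A tree is `Good` when its leaves carry pairwise distinct labels
(i.e. the leaves are bijectively labeled). -/
def Good : LTree α → Prop
  | leaf _ => True
  | node l r => Good l ∧ Good r ∧ Disjoint (labels l) (labels r)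

/-- `T` is a (rooted binary, uniquely leaf-labeled) tree on label set `𝒳`. -/
def IsTreeOn (T : LTree α) (𝒳 : Finset α) : Prop :=
  Good T ∧ labels T = 𝒳

/-- Equality of rooted trees: children of a node are unordered. -/
inductive Iso : LTree α → LTree α → Prop
  | leaf (a : α) : Iso (leaf a) (leaf a)
  | node {l₁ r₁ l₂ r₂ : LTree α} :
      Iso l₁ l₂ → Iso r₁ r₂ → Iso (node l₁ r₁) (node l₂ r₂)
  | swap {l₁ r₁ l₂ r₂ : LTree α} :
      Iso l₁ r₂ → Iso r₁ l₂ → Iso (node l₁ r₁) (node l₂ r₂)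

/-- Equality of possibly empty trees (`none` is the empty tree). -/
def OptIso : Option (LTree α) → Option (LTree α) → Prop
  | none, none => True
  | some t₁, some t₂ => Iso t₁ t₂
  | _, _ => False

/-- Restriction `T|_S`: keep exactly the leaves with labels in `S`, suppressing
the resulting degree-two vertices and degree-one roots; the result is `none`
when no leaf survives. -/
def restrict : LTree α → Finset α → Option (LTree α)
  | leaf a, S => if a ∈ S then some (leaf a) else none
  | node l r, S =>
    match restrict l S, restrict r S with
    | some l', some r' => some (node l' r')
    | some l', none => some l'
    | none, some r' => some r'
    | none, none => none

/-- `T − X`: remove from `T` every leaf whose label lies in `X`. -/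
def remove (T : LTree α) (X : Finset α) : Option (LTree α) :=
  restrict T (labels T \ X)

/-- The leaf-removal distance `d_LR(T₁,T₂)`: the minimum number of labels
whose removal makes the two trees equal. -/
noncomputable def dLR (T₁ T₂ : LTree α) : ℕ :=
  sInf {n | ∃ X : Finset α, X ⊆ labels T₁ ∪ labels T₂ ∧ X.card = n ∧
    OptIso (remove T₁ X) (remove T₂ X)}

def labelsO : Option (LTree α) → Finset α
  | none => ∅
  | some t => labels t

def GoodO : Option (LTree α) → Prop
  | none => True
  | some t => Good t

def restrictO : Option (LTree α) → Finset α → Option (LTree α)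
  | none, _ => none
  | some t, S => restrict t S

/-- A family of (possibly empty) trees is compatible if there is a single tree,
on the union of their label sets, which displays all of them. -/
def CompatibleFamO {ι : Type*} (f : ι → Option (LTree α)) : Prop :=
  ∃ TO : Option (LTree α), GoodO TO ∧
    (↑(labelsO TO) : Set α) = (⋃ i, ↑(labelsO (f i))) ∧
    ∀ i, OptIso (restrictO TO (labelsO (f i))) (f i)

/-- A family of trees is compatible if a single tree displays all of them. -/
def CompatibleFam {ι : Type*} (𝒯 : ι → LTree α) : Prop :=
  CompatibleFamO fun i => some (𝒯 i)

/-- `X` is a leaf-disagreement for the family `𝒯`: removing `X i` from `𝒯 i`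
yields a compatible family. -/
def IsLeafDisagreement {ι : Type*} (𝒯 : ι → LTree α) (X : ι → Finset α) : Prop :=
  CompatibleFamO fun i => remove (𝒯 i) (X i)

/-- `X'` is a label-disagreement for the family `𝒯`. -/
def IsLabelDisagreement {ι : Type*} (𝒯 : ι → LTree α) (X' : Finset α) : Prop :=
  CompatibleFamO fun i => remove (𝒯 i) X'

/-- `MASTRL 𝒯`: the minimum size of a leaf-disagreement for `𝒯`. -/
noncomputable def MASTRL {t : ℕ} (𝒯 : Fin t → LTree α) : ℕ :=
  sInf {v | ∃ X : Fin t → Finset α, (∀ i, X i ⊆ labels (𝒯 i)) ∧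
    (∑ i, (X i).card) = v ∧ IsLeafDisagreement 𝒯 X}

/-- The triplet `ab|c` (as a tree). -/
def tripletTree (a b c : α) : LTree α := node (node (leaf a) (leaf b)) (leaf c)

/-- A rooted triplet: a tree with exactly three (distinctly labeled) leaves. -/
def IsTriplet (R : LTree α) : Prop := Good R ∧ (labels R).card = 3

/-- `ab|c` is a triplet of `T`, i.e. `T|_{a,b,c} = ab|c`. -/
def IsTripletOf (T : LTree α) (a b c : α) : Prop :=
  OptIso (restrict T {a, b, c}) (some (tripletTree a b c))

/-- `tr(T)`: the triplet decomposition of `T`. -/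
def trSet (T : LTree α) : Set (LTree α) :=
  {R | ∃ a b c : α, R = tripletTree a b c ∧ IsTripletOf T a b c}

/-- A set of trees is compatible: some tree on the union of the label sets
displays every member. -/
def CompatibleSet (S : Set (LTree α)) : Prop :=
  ∃ TO : Option (LTree α), GoodO TO ∧
    (↑(labelsO TO) : Set α) = (⋃ R ∈ S, ↑(labels R)) ∧
    ∀ R ∈ S, OptIso (restrictO TO (labels R)) (some R)

/-- `MINRTI ℛ`: the minimum number of triplets to delete from `ℛ` so that the
remaining triplets are compatible. -/
noncomputable def MINRTI {t : ℕ} (R : Fin t → LTree α) : ℕ :=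
  sInf {m | ∃ s : Finset (Fin t), s.card = m ∧
    CompatibleFam (fun i : {i : Fin t // i ∉ s} => R i.1)}

/-- Graft the leaf `x` at the position (edge) addressed by `p` in `T`.
The empty address grafts `x` above the root of `T` (the `⊥` case); the address
of an internal/leaf vertex `v` grafts `x` on the edge between `v` and its
parent.  `none` when the address is invalid. -/
def graftAt (x : α) : LTree α → List Bool → Option (LTree α)
  | T, [] => some (node (leaf x) T)
  | leaf _, _ :: _ => none
  | node l r, b :: p =>
    if b then (graftAt x l p).map (fun l' => node l' r)
    else (graftAt x r p).map (fun r' => node l r')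

/-- `T'` is obtained from `T` by a single LPR (leaf prune-and-regraft) move on
the leaf `x`: prune `x` from `T` and regraft it, either on an edge of
`T − {x}` or above its root. -/
def LPRStep (x : α) (T T' : LTree α) : Prop :=
  (remove T {x} = none ∧ T' = leaf x) ∨
  ∃ T₀ p, remove T {x} = some T₀ ∧ graftAt x T₀ p = some T'

/-- `TurnsInto L T T'`: the LPR sequence with (ordered) leaf list `L` turns
`T` into `T'`. -/
inductive TurnsInto : List α → LTree α → LTree α → Prop
  | nil {T T' : LTree α} : Iso T T' → TurnsInto [] T T'
  | cons {x : α} {xs : List α} {T T'' T' : LTree α} :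
      LPRStep x T T'' → TurnsInto xs T'' T' → TurnsInto (x :: xs) T T'

/-- `confset(T₁,T₂)`: the collection of 3-label sets `{a,b,c}` such that
`T₁` contains a triplet on `{a,b,c}` conflicting with a triplet of `T₂`. -/
def confset (T₁ T₂ : LTree α) : Set (Finset α) :=
  {s | ∃ a b c : α, s = {a, b, c} ∧ IsTripletOf T₁ a b c ∧
    (IsTripletOf T₂ a c b ∨ IsTripletOf T₂ b c a)}

/-- `X` is a minimal disagreement between `T₁` and `T₂`. -/
def MinimalDisagreement (T₁ T₂ : LTree α) (X : Finset α) : Prop :=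
  X ⊆ labels T₁ ∪ labels T₂ ∧
  OptIso (remove T₁ X) (remove T₂ X) ∧
  ∀ X' ⊂ X, ¬ OptIso (remove T₁ X') (remove T₂ X')

/-- `u` is (the rooted subtree hanging at) a node of `T`. -/
inductive IsSubtree : LTree α → LTree α → Prop
  | refl (T : LTree α) : IsSubtree T T
  | left {u l r : LTree α} : IsSubtree u l → IsSubtree u (node l r)
  | right {u l r : LTree α} : IsSubtree u r → IsSubtree u (node l r)

/-- `u` is the least common ancestor in `T` of the labels in `Z`. -/
def IsLCA (T : LTree α) (Z : Finset α) (u : LTree α) : Prop :=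
  IsSubtree u T ∧ Z ⊆ labels u ∧
    ∀ w, IsSubtree w T → Z ⊆ labels w → IsSubtree u w

end LTree

open LTree
/-!
(i) For each `i` take a minimum set `Xᵢ` with `T − Xᵢ = Tᵢ − Xᵢ`; then `T` restricted to the union
of the surviving label sets displays every `Tᵢ − Xᵢ`.
(ii) A tree displaying all `Tᵢ − Xᵢ` is completed to a tree `T` on `𝒳` by grafting the missing
labels above its root. This leaves its restriction to `𝒳 \ Xᵢ` unchanged, so `T − Xᵢ = Tᵢ − Xᵢ`
and `d_LR(T, Tᵢ) ≤ |Xᵢ|`.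
The two minima agree because (i) and (ii) bound each one by the other.
-/

theorem Nat.sInf_eq_sInf_of_forall_exists_le {A B : Set ℕ}
    (hAB : ∀ a ∈ A, ∃ b ∈ B, b ≤ a) (hBA : ∀ b ∈ B, ∃ a ∈ A, a ≤ b) : sInf A = sInf B := by
  rcases B.eq_empty_or_nonempty with rfl | hB
  · have hA : A = ∅ := Set.eq_empty_of_forall_notMem fun a ha => by simpa using hAB a ha
    rw [hA]
  have hA : A.Nonempty := let ⟨a, ha, _⟩ := hBA _ (Nat.sInf_mem hB); ⟨a, ha⟩
  apply le_antisymm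
  · obtain ⟨a, ha, hab⟩ := hBA _ (Nat.sInf_mem hB)
    exact (Nat.sInf_le ha).trans hab
  · obtain ⟨b, hb, hba⟩ := hAB _ (Nat.sInf_mem hA)
    exact (Nat.sInf_le hb).trans hba

namespace LTree

variable {α : Type u} [DecidableEq α]

theorem labels_nonempty : ∀ T : LTree α, (labels T).Nonempty
  | leaf a => ⟨a, by simp [labels]⟩
  | node l r => (labels_nonempty l).mono Finset.subset_union_left

theorem Iso.labels_eq {T₁ T₂ : LTree α} (h : Iso T₁ T₂) : labels T₁ = labels T₂ := by
  induction h with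
  | leaf => rfl
  | node _ _ ihl ihr => simp only [labels, ihl, ihr]
  | swap _ _ ihl ihr => simp only [labels, ihl, ihr, Finset.union_comm]

theorem OptIso.labelsO_eq {u v : Option (LTree α)} (h : OptIso u v) : labelsO u = labelsO v :=
  match u, v, h with
  | none, none, _ => rfl
  | some _, some _, h => Iso.labels_eq h

theorem labelsO_restrict (T : LTree α) (S : Finset α) :
    labelsO (restrict T S) = labels T ∩ S := by
  induction T with
  | leaf a => by_cases h : a ∈ S <;> simp [restrict, labels, labelsO, h]
  | node l r ihl ihr =>
    simp only [labels, Finset.union_inter_distrib_right, ← ihl, ← ihr, restrict]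
    cases restrict l S <;> cases restrict r S <;> simp [labelsO, labels]

theorem restrict_eq_none_iff {T : LTree α} {S : Finset α} :
    restrict T S = none ↔ Disjoint (labels T) S := by
  rw [Finset.disjoint_iff_inter_eq_empty, ← labelsO_restrict]
  cases restrict T S with
  | none => simp [labelsO]
  | some u => simpa [labelsO] using (labels_nonempty u).ne_empty

theorem labelsO_remove (T : LTree α) (X : Finset α) :
    labelsO (remove T X) = labels T \ X := by
  rw [remove, labelsO_restrict, Finset.inter_eq_right.mpr Finset.sdiff_subset]

theorem goodO_restrict {T : LTree α} (hT : Good T) (S : Finset α) : GoodO (restrict T S) := by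
  induction T with
  | leaf a => by_cases h : a ∈ S <;> simp [restrict, h, GoodO, Good]
  | node l r ihl ihr =>
    obtain ⟨hgl, hgr, hd⟩ := hT
    have hsub : ∀ T : LTree α, labelsO (restrict T S) ⊆ labels T := fun T =>
      (labelsO_restrict T S).trans_le Finset.inter_subset_left
    have Hl := ihl hgl
    have Hr := ihr hgr
    have el := hsub l
    have er := hsub r
    simp only [restrict]
    revert Hl Hr el er
    cases restrict l S <;> cases restrict r S <;> intro Hl Hr el er
    exacts [trivial, Hr, Hl, ⟨Hl, Hr, hd.mono el er⟩]

theorem restrictO_restrict (T : LTree α) (A B : Finset α) :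
    restrictO (restrict T A) B = restrict T (A ∩ B) := by
  induction T with
  | leaf a => by_cases ha : a ∈ A <;> by_cases hb : a ∈ B <;> simp [restrict, restrictO, ha, hb]
  | node l r ihl ihr =>
    have hnone : ∀ u : LTree α, restrict u A = none → restrict u (A ∩ B) = none := by
      simp only [restrict_eq_none_iff]
      exact fun u hu => hu.mono_right Finset.inter_subset_left
    simp only [restrict]
    cases hl : restrict l A <;> cases hr : restrict r A <;>
      simp only [hl, hr, restrictO] at ihl ihr ⊢
    · rw [hnone l hl, hnone r hr]
    · rw [hnone l hl, ← ihr]; cases restrict _ B <;> rfl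
    · rw [hnone r hr, ← ihl]; cases restrict _ B <;> rfl
    · rw [← ihl, ← ihr]; rfl

theorem compatibleFamO_of_optIso_restrict {ι : Type*} [Fintype ι] {T : LTree α} (hT : Good T)
    {f : ι → Option (LTree α)} (hf : ∀ i, OptIso (restrict T (labelsO (f i))) (f i)) :
    CompatibleFamO f := by
  have hsub : ∀ i, labelsO (f i) ⊆ labels T := fun i => by
    rw [← (hf i).labelsO_eq, labelsO_restrict]
    exact Finset.inter_subset_left
  set L := Finset.univ.biUnion fun i => labelsO (f i)
  refine ⟨restrict T L, goodO_restrict hT L, ?_, fun i => ?_⟩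
  · rw [labelsO_restrict, Finset.inter_eq_right.mpr (Finset.biUnion_subset.mpr fun i _ => hsub i)]
    ext; simp
  · rw [restrictO_restrict, Finset.inter_eq_right.mpr (Finset.subset_biUnion_of_mem _
      (Finset.mem_univ i))]
    exact hf i

theorem isLeafDisagreement_of_optIso_remove {ι : Type*} [Fintype ι] {T : LTree α} (hT : Good T)
    {𝒯 : ι → LTree α} {X : ι → Finset α} (h : ∀ i, OptIso (remove T (X i)) (remove (𝒯 i) (X i))) :
    IsLeafDisagreement 𝒯 X := by
  refine compatibleFamO_of_optIso_restrict hT fun i => ?_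
  rw [← (h i).labelsO_eq, labelsO_remove, ← remove]
  exact h i

theorem exists_card_eq_dLR (T₁ T₂ : LTree α) :
    ∃ X : Finset α, X ⊆ labels T₁ ∪ labels T₂ ∧ X.card = dLR T₁ T₂ ∧
      OptIso (remove T₁ X) (remove T₂ X) := by
  have hremove : ∀ T : LTree α, labels T ⊆ labels T₁ ∪ labels T₂ →
      remove T (labels T₁ ∪ labels T₂) = none := fun T hT => by
    rw [remove, restrict_eq_none_iff, Finset.sdiff_eq_empty_iff_subset.mpr hT]
    exact Finset.disjoint_empty_right _
  refine Nat.sInf_mem (s := {n | ∃ X : Finset α, X ⊆ labels T₁ ∪ labels T₂ ∧ X.card = n ∧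
    OptIso (remove T₁ X) (remove T₂ X)}) ⟨_, _, subset_rfl, rfl, ?_⟩
  rw [hremove T₁ Finset.subset_union_left, hremove T₂ Finset.subset_union_right]
  trivial

theorem dLR_le {T₁ T₂ : LTree α} {X : Finset α} (hX : X ⊆ labels T₁ ∪ labels T₂)
    (h : OptIso (remove T₁ X) (remove T₂ X)) : dLR T₁ T₂ ≤ X.card :=
  Nat.sInf_le ⟨X, hX, rfl, h⟩

theorem exists_isLeafDisagreement_card_eq_dLR {ι : Type*} [Fintype ι] {T : LTree α} (hT : Good T)
    (𝒯 : ι → LTree α) :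
    ∃ X : ι → Finset α, (∀ i, X i ⊆ labels T ∪ labels (𝒯 i) ∧ (X i).card = dLR T (𝒯 i)) ∧
      IsLeafDisagreement 𝒯 X := by
  choose X hX hcard hiso using fun i => exists_card_eq_dLR T (𝒯 i)
  exact ⟨X, fun i => ⟨hX i, hcard i⟩, isLeafDisagreement_of_optIso_remove hT hiso⟩

def graftAbove (a : α) : Option (LTree α) → LTree α
  | none => leaf a
  | some u => node (leaf a) u

theorem labels_graftAbove (a : α) (u : Option (LTree α)) :
    labels (graftAbove a u) = insert a (labelsO u) := by
  cases u <;> simp [graftAbove, labels, labelsO]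

theorem good_graftAbove {a : α} {u : Option (LTree α)} (hu : GoodO u) (ha : a ∉ labelsO u) :
    Good (graftAbove a u) := by
  cases u with
  | none => trivial
  | some u => exact ⟨trivial, hu, by simpa [labels, labelsO] using ha⟩

theorem restrict_graftAbove {a : α} {S : Finset α} (u : Option (LTree α)) (ha : a ∉ S) :
    restrict (graftAbove a u) S = restrictO u S := by
  cases u with
  | none => simp [graftAbove, restrict, restrictO, ha]
  | some u => simp only [graftAbove, restrict, restrictO, ha, if_false]; cases restrict u S <;> rfl

theorem exists_goodO_labelsO_eq_union {u : Option (LTree α)} (hu : GoodO u) {s : Finset α}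
    (hs : Disjoint s (labelsO u)) :
    ∃ v : Option (LTree α), GoodO v ∧ labelsO v = s ∪ labelsO u ∧
      ∀ A, Disjoint A s → restrictO v A = restrictO u A := by
  induction s using Finset.induction_on with
  | empty => exact ⟨u, hu, by simp, fun _ _ => rfl⟩
  | insert a s ha ih =>
    rw [Finset.disjoint_insert_left] at hs
    obtain ⟨v, hv, hlab, hres⟩ := ih hs.2
    refine ⟨some (graftAbove a v), good_graftAbove hv ?_, ?_, fun A hA => ?_⟩
    · simp [hlab, ha, hs.1]
    · show labels (graftAbove a v) = _
      rw [labels_graftAbove, hlab, Finset.insert_union]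
    · rw [Finset.disjoint_insert_right] at hA
      exact (restrict_graftAbove v hA.1).trans (hres A hA.2)

theorem exists_isTreeOn_restrict_eq {u : Option (LTree α)} (hu : GoodO u) {𝒳 : Finset α}
    (hsub : labelsO u ⊆ 𝒳) (hne : 𝒳.Nonempty) :
    ∃ T : LTree α, IsTreeOn T 𝒳 ∧ ∀ A ⊆ labelsO u, restrict T A = restrictO u A := by
  obtain ⟨v, hv, hlab, hres⟩ := exists_goodO_labelsO_eq_union hu (Finset.sdiff_disjoint (t := 𝒳))
  rw [Finset.sdiff_union_of_subset hsub] at hlab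
  cases v with
  | none => exact absurd hlab.symm (by simpa [labelsO] using hne.ne_empty)
  | some T =>
    exact ⟨T, ⟨hv, hlab⟩, fun A hA =>
      hres A (Finset.disjoint_of_subset_left hA Finset.disjoint_sdiff)⟩

theorem exists_isTreeOn_dLR_le {ι : Type*} {𝒳 : Finset α} (hne : 𝒳.Nonempty) {𝒯 : ι → LTree α}
    (h𝒯 : ∀ i, labels (𝒯 i) = 𝒳) {X : ι → Finset α} (hX : ∀ i, X i ⊆ 𝒳)
    (hdis : IsLeafDisagreement 𝒯 X) :
    ∃ T : LTree α, IsTreeOn T 𝒳 ∧ ∀ i, dLR T (𝒯 i) ≤ (X i).card := by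
  obtain ⟨u, hu, hlab, hdisp⟩ := hdis
  have hreduced : ∀ i, labelsO (remove (𝒯 i) (X i)) = 𝒳 \ X i := fun i => by
    rw [labelsO_remove, h𝒯 i]
  have hsub : ∀ i, 𝒳 \ X i ⊆ labelsO u := fun i => by
    rw [← hreduced, ← Finset.coe_subset, hlab]
    exact Set.subset_iUnion (fun i => (labelsO (remove (𝒯 i) (X i)) : Set α)) i
  have hsub𝒳 : labelsO u ⊆ 𝒳 := by
    rw [← Finset.coe_subset, hlab, Set.iUnion_subset_iff]
    exact fun i => by rw [hreduced]; exact Finset.coe_subset.mpr Finset.sdiff_subset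
  obtain ⟨T, hT, hres⟩ := exists_isTreeOn_restrict_eq hu hsub𝒳 hne
  refine ⟨T, hT, fun i => dLR_le (by rw [hT.2, h𝒯 i, Finset.union_self]; exact hX i) ?_⟩
  rw [remove, hT.2, hres _ (hsub i), ← hreduced]
  exact hdisp i

end LTree

/-- Lemma 1 of the paper.  Let `𝒯 = {T₁,…,T_t}` be trees on the
same label set `𝒳`.  (i) Every tree `T` on `𝒳` yields a leaf-disagreement of size
at most `∑ᵢ d_LR(T, Tᵢ)`.  (ii) Every leaf-disagreement of size `v` yields a tree
`T` on `𝒳` with `∑ᵢ d_LR(T, Tᵢ) ≤ v`.  Consequently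
`MASTRL 𝒯 = min_{T on 𝒳} ∑ᵢ d_LR(T, Tᵢ)`. -/
theorem astlr_lrconsensus_equivalence {α : Type u} [DecidableEq α] {t : ℕ}
    (ht : 0 < t) (𝒳 : Finset α) (𝒯 : Fin t → LTree α)
    (h𝒯 : ∀ i, IsTreeOn (𝒯 i) 𝒳) :
    (∀ T : LTree α, IsTreeOn T 𝒳 →
        ∃ X : Fin t → Finset α, (∀ i, X i ⊆ 𝒳) ∧ IsLeafDisagreement 𝒯 X ∧
          (∑ i, (X i).card) ≤ ∑ i, dLR T (𝒯 i)) ∧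
    (∀ (X : Fin t → Finset α) (v : ℕ), (∀ i, X i ⊆ 𝒳) →
        IsLeafDisagreement 𝒯 X → (∑ i, (X i).card) = v →
        ∃ T : LTree α, IsTreeOn T 𝒳 ∧ (∑ i, dLR T (𝒯 i)) ≤ v) ∧
    MASTRL 𝒯 =
      sInf {v | ∃ T : LTree α, IsTreeOn T 𝒳 ∧ (∑ i, dLR T (𝒯 i)) = v} := by
  have hlabels : ∀ i, labels (𝒯 i) = 𝒳 := fun i => (h𝒯 i).2
  have part1 : ∀ T : LTree α, IsTreeOn T 𝒳 →
      ∃ X : Fin t → Finset α, (∀ i, X i ⊆ 𝒳) ∧ IsLeafDisagreement 𝒯 X ∧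
        (∑ i, (X i).card) ≤ ∑ i, dLR T (𝒯 i) := by
    intro T hT
    obtain ⟨X, hX, hdis⟩ := exists_isLeafDisagreement_card_eq_dLR hT.1 𝒯
    refine ⟨X, fun i => ?_, hdis, (Finset.sum_congr rfl fun i _ => (hX i).2).le⟩
    simpa [hT.2, hlabels] using (hX i).1
  have part2 : ∀ (X : Fin t → Finset α) (v : ℕ), (∀ i, X i ⊆ 𝒳) →
      IsLeafDisagreement 𝒯 X → (∑ i, (X i).card) = v →
      ∃ T : LTree α, IsTreeOn T 𝒳 ∧ (∑ i, dLR T (𝒯 i)) ≤ v := by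
    rintro X _ hX hdis rfl
    have hne : 𝒳.Nonempty := hlabels ⟨0, ht⟩ ▸ labels_nonempty _
    obtain ⟨T, hT, hle⟩ := exists_isTreeOn_dLR_le hne hlabels hX hdis
    exact ⟨T, hT, Finset.sum_le_sum fun i _ => hle i⟩
  refine ⟨part1, part2, Nat.sInf_eq_sInf_of_forall_exists_le ?_ ?_⟩
  · rintro _ ⟨X, hX, rfl, hdis⟩
    obtain ⟨T, hT, hle⟩ := part2 X _ (fun i => hlabels i ▸ hX i) hdis rfl
    exact ⟨_, ⟨T, hT, rfl⟩, hle⟩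
  · rintro _ ⟨T, hT, rfl⟩
    obtain ⟨X, hX, hdis, hle⟩ := part1 T hT
    exact ⟨_, ⟨X, fun i => (hlabels i).symm ▸ hX i, rfl, hdis⟩, hle⟩
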